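/- (Lemma 6.) Let n ≥ 3 and let S ⊆ ℤ be a finite nonempty set of integers, and let A be the K-linear span of {e_i : i ∈ S} inside the free K-module with basis (e_k)_{k∈ℤ}, where K = ℚ(p,q). If A is closed under the (p,q)-deformed Virasoro–Witt n-bracket and the Filippov fundamental identity holds for all elements of A, then |S| ≤ n + 1. -/

import Mathlib

/-- The structure constant `c_n(i_1,…,i_n) = (p q⁻¹)^{⌊(n−1)/2⌋·(i_1+⋯+i_n)} · det M`,
where `M_{r,j} = p^{(r − 2⌊(n−1)/2⌋)·i_j} q^{r·i_j}` for `r = 0,…,n−1`, `j = 1,…,n`. -/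
noncomputable def vwC {K : Type*} [Field K] (p q : K) (n : ℕ) (i : Fin n → ℤ) : K :=
  (p * q⁻¹) ^ (((((n - 1) / 2 : ℕ) : ℤ)) * ∑ j, i j) *
    Matrix.det (Matrix.of fun r j : Fin n =>
      p ^ (((r : ℤ) - 2 * (((n - 1) / 2 : ℕ) : ℤ)) * i j) * q ^ ((r : ℤ) * i j))

/-- The `(p,q)`-deformed Virasoro–Witt `n`-bracket: the (alternating) `n`-multilinear
map on the free module `ℤ →₀ K` determined on basis vectors by
`[e_{i_1},…,e_{i_n}] = c_n(i_1,…,i_n) • e_{i_1+⋯+i_n}`. -/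
noncomputable def vwBr {K : Type*} [Field K] (p q : K) (n : ℕ)
    (v : Fin n → (ℤ →₀ K)) : ℤ →₀ K :=
  ∑ f ∈ Fintype.piFinset (fun j => (v j).support),
    ((∏ j, v j (f j)) * vwC p q n f) • Finsupp.single (∑ j, f j) (1 : K)

/-- The Filippov fundamental identity for the tuples `(Y₁,…,Y_{n−1})` (the first `n−1`
components of `Y`) and `(X₁,…,X_n)`:
`[Y_1,…,Y_{n−1},[X_1,…,X_n]] = Σ_{k=1}^n [X_1,…,[Y_1,…,Y_{n−1},X_k],…,X_n]`. -/
noncomputable def holdsFI {K : Type*} [Field K] (p q : K) (n : ℕ) (hn : 0 < n)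
    (Y X : Fin n → (ℤ →₀ K)) : Prop :=
  vwBr p q n (Function.update Y ⟨n - 1, Nat.sub_lt hn Nat.one_pos⟩ (vwBr p q n X)) =
    ∑ k : Fin n, vwBr p q n (Function.update X k
      (vwBr p q n (Function.update Y ⟨n - 1, Nat.sub_lt hn Nat.one_pos⟩ (X k))))

/-- The field `K = ℚ(p,q)` of rational functions in two variables over `ℚ`. -/
abbrev Kpq : Type := FractionRing (MvPolynomial (Fin 2) ℚ)

/-- The image of the first variable `p` in `ℚ(p,q)`. -/
noncomputable def pVar : Kpq :=
  algebraMap (MvPolynomial (Fin 2) ℚ) Kpq (MvPolynomial.X 0)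

/-- The image of the second variable `q` in `ℚ(p,q)`. -/
noncomputable def qVar : Kpq :=
  algebraMap (MvPolynomial (Fin 2) ℚ) Kpq (MvPolynomial.X 1)

/-!
For pairwise distinct indices the structure constant is, up to nonzero factors, a Vandermonde
determinant in the nodes `(pq)^{i_j}`, which are distinct because `pq` is not a root of unity in
`ℚ(p,q)`; so closure of `A` under the bracket says that `S` contains the sum of any `n` of its
elements. If `|S| ≥ n + 2`, let `a = min S`, `b = max S`: for every `(n-1)`-subset `W`
of `S ∖ {a, b}`, both `a + ΣW` and `b + ΣW` lie in `S`, so `ΣW = 0`; but `S ∖ {a, b}` has at least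
`n` elements, so two such `W` differ in a single element, which is absurd.
-/

open Finset

theorem zpow_injective_of_not_isOfFinOrder {G₀ : Type*} [GroupWithZero G₀] {a : G₀}
    (ha : a ≠ 0) (h : ¬IsOfFinOrder a) : Function.Injective fun k : ℤ => a ^ k := by
  lift a to G₀ˣ using ha.isUnit
  rw [Units.isOfFinOrder_val] at h
  intro k l hkl
  exact injective_zpow_iff_not_isOfFinOrder.2 h (Units.val_injective (by simpa using hkl))

theorem pVar_mul_qVar :
    pVar * qVar = algebraMap (MvPolynomial (Fin 2) ℚ) Kpq (MvPolynomial.X 0 * MvPolynomial.X 1) :=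
  (map_mul _ _ _).symm

theorem pVar_mul_qVar_ne_zero : pVar * qVar ≠ 0 := by
  rw [pVar_mul_qVar, map_ne_zero_iff _ (IsFractionRing.injective _ Kpq)]
  exact mul_ne_zero (MvPolynomial.X_ne_zero 0) (MvPolynomial.X_ne_zero 1)

theorem not_isOfFinOrder_pVar_mul_qVar : ¬IsOfFinOrder (pVar * qVar) := by
  rw [pVar_mul_qVar]
  intro h
  replace h := ((IsFractionRing.injective (MvPolynomial (Fin 2) ℚ) Kpq).isOfFinOrder_iff
    (f := (algebraMap (MvPolynomial (Fin 2) ℚ) Kpq).toMonoidHom)).1 h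
  -- evaluating at `p = q = 2` would make `4` a root of unity
  have h4 := (MvPolynomial.eval fun _ => (2 : ℚ)).toMonoidHom.isOfFinOrder h
  norm_num at h4
  exact absurd (h4.eq_one (by norm_num)) (by norm_num)

theorem vwC_ne_zero {K : Type*} [Field K] {p q : K}
    (hpq : Function.Injective fun k : ℤ => (p * q) ^ k) {n : ℕ} {i : Fin n → ℤ}
    (hi : Function.Injective i) : vwC p q n i ≠ 0 := by
  have hpq0 : p * q ≠ 0 := fun h => by simpa [h] using @hpq 1 2
  have hp : p ≠ 0 := left_ne_zero_of_mul hpq0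
  have hq : q ≠ 0 := right_ne_zero_of_mul hpq0
  set N : ℤ := (((n - 1) / 2 : ℕ) : ℤ)
  have hM : (Matrix.of fun r j : Fin n => p ^ (((r : ℤ) - 2 * N) * i j) * q ^ ((r : ℤ) * i j)) =
      Matrix.of fun r j => p ^ (-(2 * N) * i j) *
        (Matrix.vandermonde fun j => (p * q) ^ i j).transpose r j := by
    ext r j
    rw [Matrix.of_apply, Matrix.of_apply, Matrix.transpose_apply, Matrix.vandermonde_apply,
      ← zpow_natCast, ← zpow_mul, mul_zpow, sub_eq_neg_add, add_mul, zpow_add₀ hp]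
    ring_nf
  rw [vwC, hM, Matrix.det_mul_row, Matrix.det_transpose, Matrix.det_vandermonde]
  refine mul_ne_zero (zpow_ne_zero _ (mul_ne_zero hp (inv_ne_zero hq))) <|
    mul_ne_zero (prod_ne_zero_iff.2 fun j _ => zpow_ne_zero _ hp) <|
      prod_ne_zero_iff.2 fun r _ => prod_ne_zero_iff.2 fun j hj => sub_ne_zero.2 fun h => ?_
  exact (mem_Ioi.1 hj).ne' (hi (hpq h))

theorem vwBr_single {K : Type*} [Field K] (p q : K) (n : ℕ) (i : Fin n → ℤ) :
    vwBr p q n (fun j => Finsupp.single (i j) 1) = vwC p q n i • Finsupp.single (∑ j, i j) 1 := by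
  have hpi : Fintype.piFinset (fun j => (Finsupp.single (i j) (1 : K)).support) = {i} := by
    ext f
    simp [funext_iff]
  rw [vwBr, hpi, sum_singleton]
  simp only [Finsupp.single_eq_same, prod_const_one, one_mul]

theorem sum_mem_of_vwBr_mem_supported {K : Type*} [Field K] {p q : K}
    (hpq : Function.Injective fun k : ℤ => (p * q) ^ k) {n : ℕ} {S : Set ℤ}
    (hclosed : ∀ v : Fin n → (ℤ →₀ K), (∀ j, v j ∈ Finsupp.supported K K S) →
      vwBr p q n v ∈ Finsupp.supported K K S)
    {T : Finset ℤ} (hTS : ↑T ⊆ S) (hT : T.card = n) : ∑ x ∈ T, x ∈ S := by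
  set i := T.orderEmbOfFin hT
  have hsum : ∑ j, i j = ∑ x ∈ T, x := by
    rw [← T.map_orderEmbOfFin_univ hT, sum_map]
    rfl
  have hbr := hclosed (fun j => Finsupp.single (i j) 1) fun j =>
    Finsupp.single_mem_supported K 1 (hTS (T.orderEmbOfFin_mem hT j))
  rw [vwBr_single, Finsupp.smul_single, smul_eq_mul, mul_one,
    Finsupp.mem_supported, Finsupp.support_single _ (vwC_ne_zero hpq i.injective),
    coe_singleton, Set.singleton_subset_iff, hsum] at hbr
  exact hbr

theorem Finset.card_le_of_forall_card_eq_sum_eq_zero {α : Type*} [AddCancelCommMonoid α]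
    {s : Finset α} {k : ℕ} (hk : 0 < k) (h : ∀ t ⊆ s, t.card = k → ∑ x ∈ t, x = 0) :
    s.card ≤ k := by
  classical
  by_contra! hs
  obtain ⟨x, hx, y, hy, hxy⟩ := one_lt_card.1 (show 1 < s.card by omega)
  obtain ⟨t, hts, ht⟩ := exists_subset_card_eq (s := (s.erase x).erase y) (n := k - 1) <| by
    rw [card_erase_of_mem (mem_erase.2 ⟨hxy.symm, hy⟩), card_erase_of_mem hx]
    omega
  have hxt : x ∉ t := fun h => by simpa using hts h
  have hyt : y ∉ t := fun h => by simpa using hts h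
  have hsub : ∀ z ∈ s, insert z t ⊆ s := fun z hz =>
    insert_subset hz (hts.trans ((erase_subset _ _).trans (erase_subset _ _)))
  have hx0 := h _ (hsub x hx) (by rw [card_insert_of_notMem hxt]; omega)
  have hy0 := h _ (hsub y hy) (by rw [card_insert_of_notMem hyt]; omega)
  rw [sum_insert hxt] at hx0
  rw [sum_insert hyt, ← hx0] at hy0
  exact hxy (add_right_cancel hy0).symm

theorem Finset.card_le_of_forall_card_eq_sum_mem {α : Type*} [AddCommGroup α] [LinearOrder α]
    [IsOrderedAddMonoid α] {s : Finset α} {n : ℕ} (hn : 2 ≤ n)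
    (h : ∀ t ⊆ s, t.card = n → ∑ x ∈ t, x ∈ s) : s.card ≤ n + 1 := by
  classical
  by_contra! hs
  have hne : s.Nonempty := card_pos.1 (by omega)
  set a := s.min' hne
  set b := s.max' hne
  have hab : a < b := min'_lt_max'_of_card s (by omega)
  set s' := (s.erase b).erase a
  have hs' : s'.card = s.card - 2 := by
    rw [card_erase_of_mem (mem_erase.2 ⟨hab.ne, min'_mem s hne⟩),
      card_erase_of_mem (max'_mem s hne)]
    omega
  have hzero : ∀ t ⊆ s', t.card = n - 1 → ∑ x ∈ t, x = 0 := by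
    intro t hts ht
    have hat : a ∉ t := fun h => by simpa [s'] using hts h
    have hbt : b ∉ t := fun h => by simpa [s'] using hts h
    have hts' : t ⊆ s := hts.trans ((erase_subset _ _).trans (erase_subset _ _))
    have hsa := h _ (insert_subset (min'_mem s hne) hts') (by rw [card_insert_of_notMem hat]; omega)
    have hsb := h _ (insert_subset (max'_mem s hne) hts') (by rw [card_insert_of_notMem hbt]; omega)
    rw [sum_insert hat] at hsa
    rw [sum_insert hbt] at hsb
    have hlo : a ≤ a + ∑ x ∈ t, x := min'_le s _ hsa
    have hhi : b + ∑ x ∈ t, x ≤ b := le_max' s _ hsb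
    exact le_antisymm (by simpa using hhi) (by simpa using hlo)
  have hs'_le := card_le_of_forall_card_eq_sum_eq_zero (by omega) hzero
  omega

/-- **Lemma 6.** Let `n ≥ 3`, let `S ⊆ ℤ` be finite and nonempty, and
let `A` be the `K`-span of `{e_i : i ∈ S}` over `K = ℚ(p,q)`. If `A` is closed under
the `(p,q)`-deformed Virasoro–Witt `n`-bracket and the Filippov fundamental identity
holds for all elements of `A`, then `|S| ≤ n + 1`. -/
theorem finite_n_Lie_subalgebra_card_le
    (n : ℕ) (hn : 3 ≤ n) (S : Finset ℤ)
    (A : Submodule Kpq (ℤ →₀ Kpq))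
    (hA : A = Submodule.span Kpq ((fun i : ℤ => Finsupp.single i (1 : Kpq)) '' ↑S))
    (hclosed : ∀ v : Fin n → (ℤ →₀ Kpq), (∀ j, v j ∈ A) → vwBr pVar qVar n v ∈ A) :
    S.card ≤ n + 1 := by
  rw [← Finsupp.supported_eq_span_single] at hA
  subst hA
  have hpq := zpow_injective_of_not_isOfFinOrder
    pVar_mul_qVar_ne_zero not_isOfFinOrder_pVar_mul_qVar
  exact card_le_of_forall_card_eq_sum_mem (by omega) fun T hTS hT =>
    sum_mem_of_vwBr_mem_supported hpq hclosed (by exact_mod_cast hTS) hT
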